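/- For two alternatives, the naïve randomized sink mechanism (pick each agent as sink with probability 1/n, then choose the alternative maximizing the total valuation of the remaining agents) has expected welfare loss at most (⌈n/2⌉/n)·M on every valuation profile, and this bound is approached arbitrarily closely by some profiles; hence its expected sample inefficiency is (1/n²)·⌈n/2⌉. -/

import Mathlib

/-!
Let `a` be a welfare-maximising alternative, `d j = v j a - v j (!a)` the margins and
`D = ∑ j, d j ≥ 0`. Sink `i` picks `!a` only if `D ≤ d i`, and then loses exactly `D`, so with
`k` erring sinks the total loss is `k * D`. Margins lie in `(-M, M)`, which gives `D < M` as soon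
as `k > 0`, and summing `D ≤ d i` over the erring sinks gives `(k - 1) D ≤ (n - k) M`. Together
these force `k D ≤ ⌈n/2⌉ M` (written `(n + 1) / 2` in `ℕ`).

Conversely, give `⌈n/2⌉` agents margin `s M` and the others a common margin `c` with total
`D = s² M`. Then exactly those `⌈n/2⌉` sinks err, with strict preferences so that tie-breaking
plays no role, and the loss `⌈n/2⌉ s² M` tends to `⌈n/2⌉ M` as `s → 1`.
-/

open Finset Filter Topology

variable {ι : Type*}

noncomputable def marginProfile (d : ι → ℝ) : ι → Bool → ℝ :=
  fun j x ↦ bif x then d j / 2 else -(d j / 2)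

lemma marginProfile_true_sub_false (d : ι → ℝ) (j : ι) :
    marginProfile d j true - marginProfile d j false = d j := by
  simp only [marginProfile, cond_true, cond_false]; ring

lemma marginProfile_false_sub_true (d : ι → ℝ) (j : ι) :
    marginProfile d j false - marginProfile d j true = -d j := by
  rw [← neg_sub, marginProfile_true_sub_false]

lemma marginProfile_mem_Ioo {d : ι → ℝ} {M : ℝ} (hd : ∀ j, d j ∈ Set.Ioo (-M) M) (j : ι)
    (x : Bool) : marginProfile d j x ∈ Set.Ioo (-(M / 2)) (M / 2) := by
  obtain ⟨h₁, h₂⟩ := hd j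
  cases x <;> constructor <;> simp only [marginProfile, cond_true, cond_false] <;> linarith

variable [Fintype ι]

def IsSinkChoice [DecidableEq ι] (v : ι → Bool → ℝ) (g : ι → Bool) : Prop :=
  ∀ i x, ∑ j ∈ univ.erase i, v j x ≤ ∑ j ∈ univ.erase i, v j (g i)

def welfareLoss (v : ι → Bool → ℝ) (g : ι → Bool) : ℝ :=
  ∑ i, (max (∑ j, v j true) (∑ j, v j false) - ∑ j, v j (g i))

lemma IsSinkChoice.sum_sub_le [DecidableEq ι] {v : ι → Bool → ℝ} {g : ι → Bool}
    (hg : IsSinkChoice v g) {i : ι} {a : Bool} (hi : g i = !a) :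
    ∑ j, (v j a - v j (!a)) ≤ v i a - v i (!a) := by
  have h := hg i a
  rw [hi] at h
  rw [sum_sub_distrib, ← add_sum_erase _ _ (mem_univ i), ← add_sum_erase _ _ (mem_univ i)]
  linarith

lemma welfareLoss_eq_card_mul {v : ι → Bool → ℝ} {a : Bool}
    (ha : ∑ j, v j (!a) ≤ ∑ j, v j a) (g : ι → Bool) :
    welfareLoss v g = #{i | g i = !a} * ∑ j, (v j a - v j (!a)) := by
  have hmax : max (∑ j, v j true) (∑ j, v j false) = ∑ j, v j a := by
    cases a
    · exact max_eq_right ha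
    · exact max_eq_left ha
  have hloss : ∀ i, max (∑ j, v j true) (∑ j, v j false) - ∑ j, v j (g i) =
      if g i = !a then ∑ j, (v j a - v j (!a)) else 0 := by
    intro i
    rw [hmax, sum_sub_distrib]
    cases a <;> cases g i <;> simp
  rw [welfareLoss, sum_congr rfl fun i _ ↦ hloss i, sum_ite, sum_const_zero, add_zero,
    sum_const, nsmul_eq_mul]

lemma natCast_mul_le_half_ceil_mul {k n : ℕ} {D M : ℝ} (hkn : k ≤ n) (hD : 0 ≤ D) (hDM : D ≤ M)
    (h : ((k : ℝ) - 1) * D ≤ ((n : ℝ) - k) * M) : (k : ℝ) * D ≤ ((n + 1) / 2 : ℕ) * M := by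
  set q := (n + 1) / 2
  have hM : 0 ≤ M := hD.trans hDM
  rcases le_or_gt k q with hkq | hqk
  · calc (k : ℝ) * D ≤ q * D := by gcongr
      _ ≤ q * M := by gcongr
  · have hqk : (q : ℝ) + 1 ≤ k := by exact_mod_cast hqk
    have hnq : (n : ℝ) ≤ 2 * q := by exact_mod_cast (by omega : n ≤ 2 * q)
    have hkn : (k : ℝ) ≤ n := by exact_mod_cast hkn
    have hcount : (k : ℝ) * (n - k) ≤ q * (k - 1) := by nlinarith
    have : ((k : ℝ) - 1) * (k * D) ≤ ((k : ℝ) - 1) * (q * M) := by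
      nlinarith [mul_le_mul_of_nonneg_left h (Nat.cast_nonneg k : (0 : ℝ) ≤ k),
        mul_le_mul_of_nonneg_right hcount hM]
    exact le_of_mul_le_mul_left this (by linarith)

theorem IsSinkChoice.welfareLoss_le [DecidableEq ι] {v : ι → Bool → ℝ} {g : ι → Bool}
    (hg : IsSinkChoice v g) {M : ℝ} (hM : 0 < M) (hv : ∀ j x, v j x ∈ Set.Ioo (-(M / 2)) (M / 2)) :
    welfareLoss v g ≤ ((Fintype.card ι + 1) / 2 : ℕ) * M := by
  obtain ⟨a, ha⟩ : ∃ a : Bool, ∑ j, v j (!a) ≤ ∑ j, v j a :=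
    (le_total (∑ j, v j false) (∑ j, v j true)).elim (⟨true, ·⟩) (⟨false, ·⟩)
  set d : ι → ℝ := fun j ↦ v j a - v j (!a)
  have hd : ∀ j, d j ∈ Set.Ioo (-M) M := fun j ↦ by
    obtain ⟨h₁, h₂⟩ := hv j a
    obtain ⟨h₃, h₄⟩ := hv j (!a)
    constructor <;> simp only [d] <;> linarith
  rw [welfareLoss_eq_card_mul ha]
  set B : Finset ι := {i | g i = !a}
  rcases B.eq_empty_or_nonempty with hB | ⟨i, hi⟩
  · rw [hB, card_empty, Nat.cast_zero, zero_mul]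
    positivity
  have hbad : ∀ i ∈ B, ∑ j, d j ≤ d i := fun i hi ↦
    hg.sum_sub_le (mem_filter.1 hi).2
  refine natCast_mul_le_half_ceil_mul (card_le_univ B) (by simpa [d, sum_sub_distrib] using ha)
    ((hbad i hi).trans (hd i).2.le) ?_
  have hgood : -(((Fintype.card ι : ℝ) - #B) * M) ≤ ∑ j ∈ Bᶜ, d j := by
    have := card_nsmul_le_sum Bᶜ d (-M) fun j _ ↦ (hd j).1.le
    rwa [nsmul_eq_mul, card_compl, Nat.cast_sub (card_le_univ B), mul_neg] at this
  have hbadSum := card_nsmul_le_sum B d _ hbad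
  rw [nsmul_eq_mul] at hbadSum
  linarith [sum_add_sum_compl B d]

lemma welfareLoss_marginProfile [DecidableEq ι] {d : ι → ℝ} (hD : 0 ≤ ∑ j, d j)
    (hne : ∀ i, d i ≠ ∑ j, d j) {g : ι → Bool} (hg : IsSinkChoice (marginProfile d) g) :
    welfareLoss (marginProfile d) g = #{i | ∑ j, d j < d i} * ∑ j, d j := by
  have hfalse : ∀ i, g i = false ↔ ∑ j, d j < d i := fun i ↦ by
    constructor
    · intro hi
      have := hg.sum_sub_le (a := true) hi
      simp only [Bool.not_true, marginProfile_true_sub_false] at this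
      exact this.lt_of_ne (hne i).symm
    · intro hi
      by_contra h
      have := hg.sum_sub_le (a := false) (by simpa using h)
      simp only [Bool.not_false, marginProfile_false_sub_true, sum_neg_distrib,
        neg_le_neg_iff] at this
      linarith
  have ha : ∑ j, marginProfile d j (!true) ≤ ∑ j, marginProfile d j true := by
    simp only [marginProfile, Bool.not_true, cond_true, cond_false, sum_neg_distrib, ← sum_div]
    linarith
  rw [welfareLoss_eq_card_mul ha, Bool.not_true]
  simp only [marginProfile_true_sub_false, hfalse]

theorem exists_welfareLoss_eq [DecidableEq ι] {M s : ℝ} (hM : 0 < M) (hs₀ : 0 < s) (hs₁ : s < 1)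
    {k : ℕ} (hk₀ : 0 < k) (hk : k < Fintype.card ι) (hk₂ : 2 * k ≤ Fintype.card ι + 1) :
    ∃ v : ι → Bool → ℝ, (∀ j x, v j x ∈ Set.Ioo (-(M / 2)) (M / 2)) ∧
      ∀ g, IsSinkChoice v g → welfareLoss v g = k * (s ^ 2 * M) := by
  obtain ⟨B, -, rfl⟩ := exists_subset_card_eq (s := univ) hk.le
  set n := Fintype.card ι
  have hnk₁ : (1 : ℝ) ≤ n - #B := by
    have : (#B : ℝ) + 1 ≤ n := by exact_mod_cast hk
    linarith
  have hnk : (0 : ℝ) < n - #B := by linarith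
  set c := s * (s - #B) * M / (n - #B)
  set d : ι → ℝ := fun j ↦ if j ∈ B then s * M else c
  have hsum : ∑ j, d j = s ^ 2 * M := by
    rw [← sum_add_sum_compl B d, sum_congr rfl fun j hj ↦ if_pos hj,
      sum_congr rfl fun j hj ↦ if_neg (mem_compl.1 hj), sum_const, sum_const, card_compl,
      nsmul_eq_mul, nsmul_eq_mul, Nat.cast_sub (card_le_univ B)]
    simp only [c]
    field_simp
    ring
  replace hk₀ : (0 : ℝ) < #B := by exact_mod_cast hk₀
  replace hk₂ : (2 : ℝ) * #B ≤ n + 1 := by exact_mod_cast hk₂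
  have hsM : s ^ 2 * M < s * M := by
    have : s ^ 2 < s := by nlinarith
    gcongr
  have hc : -M < c ∧ c < s ^ 2 * M := by
    have hk₁ : (#B : ℝ) - 1 ≤ n - #B := by linarith
    have hpos₁ : 0 < s * (s - #B) + (n - #B) := by
      nlinarith [mul_le_mul_of_nonneg_left hk₁ hs₀.le,
        mul_le_mul_of_nonneg_left hnk₁ (sub_pos.2 hs₁).le, mul_pos (sub_pos.2 hs₁) (sub_pos.2 hs₁)]
    have hpos₂ : 0 < s * (n - #B) - (s - #B) := by
      nlinarith [mul_le_mul_of_nonneg_left hnk₁ hs₀.le]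
    simp only [c]
    rw [lt_div_iff₀ hnk, div_lt_iff₀ hnk]
    constructor
    · nlinarith [mul_pos hM hpos₁]
    · nlinarith [mul_pos (mul_pos hs₀ hM) hpos₂]
  have hd : ∀ j, d j ∈ Set.Ioo (-M) M := fun j ↦ by
    by_cases hj : j ∈ B
    · simp only [d, hj, if_true]; constructor <;> nlinarith
    · simp only [d, hj, if_false]; constructor <;> nlinarith
  have hbad : ∀ i, s ^ 2 * M < d i ↔ i ∈ B := fun i ↦ by
    by_cases hi : i ∈ B <;> simp only [d, hi, if_true, if_false, iff_true, iff_false, not_lt] <;>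
      linarith
  refine ⟨marginProfile d, marginProfile_mem_Ioo hd, fun g hg ↦ ?_⟩
  rw [welfareLoss_marginProfile (by rw [hsum]; positivity) (fun i ↦ ?_) hg]
  · simp only [hsum, hbad, filter_mem_eq_inter, univ_inter]
  · by_cases hi : i ∈ B <;> simp only [d, hi, if_true, if_false, hsum] <;> linarith

/-- for two alternatives, the naïve randomized sink mechanism has
expected welfare loss at most `(⌈n/2⌉/n)·M` on every profile, the bound is
approached arbitrarily closely, and the expected sample inefficiency (the
supremum of the normalized expected welfare loss) is `⌈n/2⌉/n²`. -/
theorem stmt_5 {n : ℕ} (hn : 2 ≤ n) (M : ℝ) (hM : 0 < M)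
    (f : Fin n → (Fin n → Bool → ℝ) → Bool)
    (hf : ∀ (i : Fin n) (v : Fin n → Bool → ℝ),
        (∀ j x, v j x ∈ Set.Ioo (-(M/2)) (M/2)) →
        ∀ x : Bool, ∑ j ∈ Finset.univ.erase i, v j x ≤
          ∑ j ∈ Finset.univ.erase i, v j (f i v)) :
    (∀ v : Fin n → Bool → ℝ, (∀ j x, v j x ∈ Set.Ioo (-(M/2)) (M/2)) →
        (1 / n) * ∑ i : Fin n,
            (max (∑ j, v j true) (∑ j, v j false) - ∑ j, v j (f i v))
          ≤ (((n + 1) / 2 : ℕ) : ℝ) / n * M)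
    ∧ (∀ ε > (0:ℝ), ∃ v : Fin n → Bool → ℝ,
        (∀ j x, v j x ∈ Set.Ioo (-(M/2)) (M/2)) ∧
        (1 / n) * ∑ i : Fin n,
            (max (∑ j, v j true) (∑ j, v j false) - ∑ j, v j (f i v))
          > (((n + 1) / 2 : ℕ) : ℝ) / n * M - ε)
    ∧ IsLUB { x : ℝ | ∃ v : Fin n → Bool → ℝ,
        (∀ j x', v j x' ∈ Set.Ioo (-(M/2)) (M/2)) ∧
        x = (1 / (n * M)) * ((1 / n) * ∑ i : Fin n,
            (max (∑ j, v j true) (∑ j, v j false) - ∑ j, v j (f i v))) }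
        ((((n + 1) / 2 : ℕ) : ℝ) / (n^2)) := by
  set q := (n + 1) / 2
  have upper : ∀ v : Fin n → Bool → ℝ, (∀ j x, v j x ∈ Set.Ioo (-(M / 2)) (M / 2)) →
      1 / n * welfareLoss v (f · v) ≤ q / n * M := fun v hv ↦ by
    have := IsSinkChoice.welfareLoss_le (hf · v hv) hM hv
    rw [Fintype.card_fin] at this
    rw [one_div_mul_eq_div, div_mul_eq_mul_div]
    gcongr
  have attained : ∀ s ∈ Set.Ioo (0 : ℝ) 1, ∃ v : Fin n → Bool → ℝ,
      (∀ j x, v j x ∈ Set.Ioo (-(M / 2)) (M / 2)) ∧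
        1 / n * welfareLoss v (f · v) = 1 / n * (q * (s ^ 2 * M)) := by
    rintro s ⟨hs₀, hs₁⟩
    obtain ⟨v, hv, hloss⟩ := exists_welfareLoss_eq (ι := Fin n) (k := q) hM hs₀ hs₁ (by omega)
      (by simp only [Fintype.card_fin]; omega) (by simp only [Fintype.card_fin]; omega)
    exact ⟨v, hv, by rw [hloss _ (hf · v hv)]⟩
  have hlim : Tendsto (fun s : ℝ ↦ 1 / n * (q * (s ^ 2 * M))) (𝓝[<] 1) (𝓝 (q / n * M)) := by
    have : Continuous fun s : ℝ ↦ 1 / n * (q * (s ^ 2 * M)) := by fun_prop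
    convert (this.tendsto 1).mono_left nhdsWithin_le_nhds using 2
    ring
  have hIoo : ∀ᶠ s in 𝓝[<] (1 : ℝ), s ∈ Set.Ioo 0 1 := Ioo_mem_nhdsLT one_pos
  refine ⟨upper, fun ε hε ↦ ?_, ?_⟩
  · obtain ⟨s, hs, hsε⟩ := (hIoo.and (hlim.eventually (lt_mem_nhds (sub_lt_self _ hε)))).exists
    obtain ⟨v, hv, hloss⟩ := attained s hs
    exact ⟨v, hv, hloss ▸ hsε⟩
  · have hscale : (q : ℝ) / n ^ 2 = 1 / (n * M) * (q / n * M) := by field_simp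
    rw [hscale]
    refine isLUB_of_mem_closure ?_ (mem_closure_of_tendsto (hlim.const_mul _) ?_)
    · rintro _ ⟨v, hv, rfl⟩
      exact mul_le_mul_of_nonneg_left (upper v hv) (by positivity)
    · filter_upwards [hIoo] with s hs
      obtain ⟨v, hv, hloss⟩ := attained s hs
      exact ⟨v, hv, congrArg _ hloss.symm⟩
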